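/- Let G be a finite graph, u, v ∈ V(G), and T ⊆ V(G) with |T| ≤ 1. Then in model E₂^{p,T} on the bunkbed graph, P(u₀ ↔ v₀) ≥ P(u₀ ↔ v₁) for every probability vector p = (p_e)_{e ∈ E(G)}. -/

import Mathlib

open scoped Classical

noncomputable section

/-- Indicator of a proposition, as a real number. -/
def pInd (P : Prop) : ℝ := if P then 1 else 0

variable {V : Type}

/-- The bunkbed presence graph: `σ e b` tells whether the copy of edge `e` in layer `b`
is present; vertical edges are present exactly at vertices of `T`. -/
def bbGraph (G : SimpleGraph V) (σ : Sym2 V → Bool → Bool) (T : Set V) :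
    SimpleGraph (V × Bool) where
  Adj a b := (a.2 = b.2 ∧ G.Adj a.1 b.1 ∧ σ s(a.1, b.1) a.2 = true) ∨
    (a.1 = b.1 ∧ a.2 ≠ b.2 ∧ a.1 ∈ T)
  symm := by
    refine ⟨?_⟩
    intro a b h
    rcases h with ⟨h1, h2, h3⟩ | ⟨h1, h2, h3⟩
    · exact Or.inl ⟨h1.symm, h2.symm, by rwa [Sym2.eq_swap, ← h1]⟩
    · exact Or.inr ⟨h1.symm, Ne.symm h2, h1 ▸ h3⟩
  loopless := by
    refine ⟨?_⟩
    rintro a (⟨h1, h2, h3⟩ | ⟨h1, h2, h3⟩)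
    · exact G.irrefl h2
    · exact h2 rfl

/-- Weight of a horizontal configuration in model E₂: each copy of an edge `e` of `G`
is present with probability `p e`, independently (non-edges carry weight 1/2 each so
that the total mass is 1). -/
def wE2 [Fintype V] [DecidableEq V] (G : SimpleGraph V) (p : Sym2 V → ℝ)
    (σ : Sym2 V → Bool → Bool) : ℝ :=
  ∏ e : Sym2 V, ∏ b : Bool,
    if e ∈ G.edgeSet then (if σ e b then p e else 1 - p e) else 1 / 2

/-- Connection probability in model E₂^{p,T}. -/
def PE2 [Fintype V] [DecidableEq V] (G : SimpleGraph V) (p : Sym2 V → ℝ) (T : Set V)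
    (x y : V × Bool) : ℝ :=
  ∑ σ : Sym2 V → Bool → Bool, wE2 G p σ * pInd ((bbGraph G σ T).Reachable x y)

/-- Connection probability in model E₁^p: every edge of the bunkbed graph (horizontal
and vertical) present independently with probability `p`. -/
def PE1 [Fintype V] [DecidableEq V] (G : SimpleGraph V) (p : ℝ) (x y : V × Bool) : ℝ :=
  ∑ σ : Sym2 V → Bool → Bool, ∑ η : V → Bool,
    wE2 G (fun _ => p) σ * (∏ v : V, if η v then p else 1 - p) *
      pInd ((bbGraph G σ {v | η v = true}).Reachable x y)

/-!
With at most one vertical edge the two layers interact only through that edge. If `T = ∅`,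
`u₀` and `v₁` are never connected. If `T = {x}`, then `u₀ ↔ v₀` happens exactly when `u ↔ v` in
the lower layer, while `u₀ ↔ v₁` happens exactly when `u ↔ x` in the lower layer and `x ↔ v` in
the upper one. The layers are independent copies of the same percolation on `G`, so
`P(u₀ ↔ v₁) = P(u ↔ x) P(x ↔ v) ≤ P(u ↔ x ∧ x ↔ v) ≤ P(u ↔ v) = P(u₀ ↔ v₀)`,
the middle step being Harris's inequality for the increasing events `u ↔ x` and `x ↔ v`.
-/

lemma pInd_nonneg (P : Prop) : 0 ≤ pInd P := by
  unfold pInd; split <;> norm_num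

lemma pInd_mono {P Q : Prop} (h : P → Q) : pInd P ≤ pInd Q := by
  unfold pInd
  split_ifs <;> simp_all

lemma pInd_and (P Q : Prop) : pInd (P ∧ Q) = pInd P * pInd Q := by
  unfold pInd
  by_cases hP : P <;> by_cases hQ : Q <;> simp [hP, hQ]

def layerGraph (G : SimpleGraph V) (τ : Sym2 V → Bool) : SimpleGraph V where
  Adj a b := G.Adj a b ∧ τ s(a, b) = true
  symm := ⟨fun _ _ ⟨h, hτ⟩ => ⟨h.symm, by rwa [Sym2.eq_swap]⟩⟩
  loopless := ⟨fun _ h => G.irrefl h.1⟩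

lemma layerGraph_mono (G : SimpleGraph V) : Monotone (layerGraph G) := by
  intro τ τ' hτ a b ⟨hadj, ha⟩
  have hle := hτ s(a, b)
  rw [ha] at hle
  exact ⟨hadj, top_le_iff.mp hle⟩

section Reachability

variable {G : SimpleGraph V} {σ : Sym2 V → Bool → Bool}

lemma bbGraph_reachable_of_layer {T : Set V} {a c : V} (i : Bool)
    (h : (layerGraph G (σ · i)).Reachable a c) :
    (bbGraph G σ T).Reachable (a, i) (c, i) :=
  h.map ⟨fun a => (a, i), fun hadj => Or.inl ⟨rfl, hadj.1, hadj.2⟩⟩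

lemma bbGraph_empty_reachable_snd_eq {P Q : V × Bool} (h : (bbGraph G σ ∅).Reachable P Q) :
    P.2 = Q.2 := by
  obtain ⟨w⟩ := h
  induction w with
  | nil => rfl
  | cons h _ ih =>
    rcases h with ⟨hlayer, -⟩ | ⟨-, -, hT⟩
    · exact hlayer.trans ih
    · exact absurd hT (Set.notMem_empty _)

lemma bbGraph_singleton_reachable_cases {x : V} {P Q : V × Bool}
    (h : (bbGraph G σ {x}).Reachable P Q) :
    (P.2 = Q.2 ∧ (layerGraph G (σ · P.2)).Reachable P.1 Q.1) ∨
      ((layerGraph G (σ · P.2)).Reachable P.1 x ∧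
        (layerGraph G (σ · Q.2)).Reachable x Q.1) := by
  obtain ⟨w⟩ := h
  induction w with
  | nil => exact Or.inl ⟨rfl, .rfl⟩
  | @cons P R Q h _ ih =>
    rcases h with ⟨hlayer, hadj, hσ⟩ | ⟨hcol, -, hx⟩
    · have hPR : (layerGraph G (σ · P.2)).Reachable P.1 R.1 := SimpleGraph.Adj.reachable ⟨hadj, hσ⟩
      rw [← hlayer] at ih
      rcases ih with ⟨hQ, hRQ⟩ | ⟨hRx, hxQ⟩
      · exact Or.inl ⟨hQ, hPR.trans hRQ⟩
      · exact Or.inr ⟨hPR.trans hRx, hxQ⟩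
    · have hx : P.1 = x := hx
      rw [← hcol, hx] at ih
      rcases ih with ⟨hQ, hxQ⟩ | ⟨-, hxQ⟩
      · exact Or.inr ⟨hx ▸ .rfl, hQ ▸ hxQ⟩
      · exact Or.inr ⟨hx ▸ .rfl, hxQ⟩

lemma bbGraph_singleton_reachable_same_layer_iff {x : V} (u v : V) (i : Bool) :
    (bbGraph G σ {x}).Reachable (u, i) (v, i) ↔ (layerGraph G (σ · i)).Reachable u v := by
  refine ⟨fun h => ?_, bbGraph_reachable_of_layer i⟩
  rcases bbGraph_singleton_reachable_cases h with ⟨-, huv⟩ | ⟨hux, hxv⟩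
  · exact huv
  · exact hux.trans hxv

lemma bbGraph_singleton_reachable_cross_iff {x : V} (u v : V) :
    (bbGraph G σ {x}).Reachable (u, false) (v, true) ↔
      (layerGraph G (σ · false)).Reachable u x ∧ (layerGraph G (σ · true)).Reachable x v := by
  refine ⟨fun h => ?_, fun ⟨hux, hxv⟩ => ?_⟩
  · rcases bbGraph_singleton_reachable_cases h with ⟨hlayer, -⟩ | hcross
    · exact absurd hlayer Bool.false_ne_true
    · exact hcross
  · have hrung : (bbGraph G σ {x}).Adj (x, false) (x, true) := Or.inr ⟨rfl, Bool.false_ne_true, rfl⟩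
    exact (bbGraph_reachable_of_layer false hux).trans
      (hrung.reachable.trans (bbGraph_reachable_of_layer true hxv))

end Reachability

lemma Bool.map_inf_mul_map_sup {M : Type*} [CommMonoid M] (f : Bool → M) (a b : Bool) :
    f (a ⊓ b) * f (a ⊔ b) = f a * f b := by
  cases a <;> cases b <;> simp [mul_comm]

section Weights

variable [Fintype V] (G : SimpleGraph V) (p : Sym2 V → ℝ)

def layerWeight (τ : Sym2 V → Bool) : ℝ :=
  ∏ e : Sym2 V, if e ∈ G.edgeSet then (if τ e then p e else 1 - p e) else 1 / 2

lemma layerWeight_nonneg (hp : ∀ e, 0 ≤ p e ∧ p e ≤ 1) (τ : Sym2 V → Bool) :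
    0 ≤ layerWeight G p τ :=
  Finset.prod_nonneg fun e _ => by
    split_ifs <;> linarith [hp e]

lemma layerWeight_inf_mul_sup (τ τ' : Sym2 V → Bool) :
    layerWeight G p (τ ⊓ τ') * layerWeight G p (τ ⊔ τ') =
      layerWeight G p τ * layerWeight G p τ' := by
  simp only [layerWeight, ← Finset.prod_mul_distrib]
  refine Finset.prod_congr rfl fun e _ => ?_
  exact Bool.map_inf_mul_map_sup
    (fun b => if e ∈ G.edgeSet then (if b then p e else 1 - p e) else 1 / 2) (τ e) (τ' e)

variable [DecidableEq V]

def layerProb (a b : V) : ℝ :=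
  ∑ τ : Sym2 V → Bool, layerWeight G p τ * pInd ((layerGraph G τ).Reachable a b)

lemma sum_layerWeight : ∑ τ : Sym2 V → Bool, layerWeight G p τ = 1 := by
  unfold layerWeight
  rw [← Fintype.prod_sum fun e (b : Bool) =>
    if e ∈ G.edgeSet then (if b then p e else 1 - p e) else 1 / 2]
  refine Finset.prod_eq_one fun e _ => ?_
  by_cases he : e ∈ G.edgeSet <;> simp [he]

lemma wE2_eq_layerWeight_mul (σ : Sym2 V → Bool → Bool) :
    wE2 G p σ = layerWeight G p (σ · false) * layerWeight G p (σ · true) := by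
  simp only [wE2, layerWeight, ← Finset.prod_mul_distrib, Fintype.prod_bool, mul_comm]

lemma sum_wE2_mul_layers (f g : (Sym2 V → Bool) → ℝ) :
    ∑ σ : Sym2 V → Bool → Bool, wE2 G p σ * (f (σ · false) * g (σ · true)) =
      (∑ τ, layerWeight G p τ * f τ) * ∑ τ, layerWeight G p τ * g τ := by
  rw [Finset.sum_mul_sum, ← Fintype.sum_prod_type']
  exact Fintype.sum_equiv ((Equiv.piComm _).trans (Equiv.boolArrowEquivProd _)) _ _
    fun σ => by rw [wE2_eq_layerWeight_mul, mul_mul_mul_comm]; rfl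

/-- Harris's inequality for the increasing events `a ↔ x` and `x ↔ b` within one layer. -/
lemma layerProb_mul_le (hp : ∀ e, 0 ≤ p e ∧ p e ≤ 1) (a x b : V) :
    layerProb G p a x * layerProb G p x b ≤ layerProb G p a b := by
  have reachable_mono (c d : V) :
      Monotone fun τ => pInd ((layerGraph G τ).Reachable c d) :=
    fun _ _ h => pInd_mono fun hr => hr.mono (layerGraph_mono G h)
  have harris := fkg _ _ _ (layerWeight_nonneg G p hp) (fun _ => pInd_nonneg _)
    (fun _ => pInd_nonneg _) (reachable_mono a x) (reachable_mono x b)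
    (fun τ τ' => (layerWeight_inf_mul_sup G p τ τ').ge)
  rw [sum_layerWeight, one_mul] at harris
  refine harris.trans (Finset.sum_le_sum fun τ _ => ?_)
  refine mul_le_mul_of_nonneg_left ?_ (layerWeight_nonneg G p hp τ)
  rw [← pInd_and]
  exact pInd_mono fun ⟨hax, hxb⟩ => hax.trans hxb

lemma PE2_nonneg (hp : ∀ e, 0 ≤ p e ∧ p e ≤ 1) (T : Set V) (P Q : V × Bool) :
    0 ≤ PE2 G p T P Q :=
  Finset.sum_nonneg fun σ _ => by
    rw [wE2_eq_layerWeight_mul]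
    exact mul_nonneg (mul_nonneg (layerWeight_nonneg G p hp _) (layerWeight_nonneg G p hp _))
      (pInd_nonneg _)

lemma PE2_empty_cross (u v : V) : PE2 G p ∅ (u, false) (v, true) = 0 :=
  Finset.sum_eq_zero fun σ _ => by
    rw [pInd, if_neg fun h => Bool.false_ne_true (bbGraph_empty_reachable_snd_eq h), mul_zero]

lemma PE2_singleton_same_layer (x u v : V) :
    PE2 G p {x} (u, false) (v, false) = layerProb G p u v := by
  have h := sum_wE2_mul_layers G p (fun τ => pInd ((layerGraph G τ).Reachable u v)) 1
  simp only [Pi.one_apply, mul_one, sum_layerWeight] at h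
  rw [PE2, layerProb, ← h]
  simp only [bbGraph_singleton_reachable_same_layer_iff]

lemma PE2_singleton_cross (x u v : V) :
    PE2 G p {x} (u, false) (v, true) = layerProb G p u x * layerProb G p x v := by
  rw [PE2, layerProb, layerProb, ← sum_wE2_mul_layers]
  simp only [bbGraph_singleton_reachable_cross_iff, pInd_and]

end Weights

theorem bunkbed_E2_of_small_T_general [Fintype V] [DecidableEq V] (G : SimpleGraph V)
    (u v : V) (T : Set V) (hT : T.Subsingleton)
    (p : Sym2 V → ℝ) (hp : ∀ e, 0 ≤ p e ∧ p e ≤ 1) :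
    PE2 G p T (u, false) (v, false) ≥ PE2 G p T (u, false) (v, true) := by
  rcases hT.eq_empty_or_singleton with rfl | ⟨x, rfl⟩
  · rw [PE2_empty_cross]
    exact PE2_nonneg G p hp ∅ _ _
  · rw [PE2_singleton_same_layer, PE2_singleton_cross]
    exact layerProb_mul_le G p hp u x v

/-- If `T` has at most one element, the bunkbed inequality holds in model E₂^{p,T}
for every probability vector `p`. -/
theorem bunkbed_E2_of_small_T [Fintype V] [DecidableEq V] (G : SimpleGraph V)
    (hconn : G.Connected) (u v : V) (T : Set V) (hT : T.Subsingleton)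
    (p : Sym2 V → ℝ) (hp : ∀ e, 0 ≤ p e ∧ p e ≤ 1) :
    PE2 G p T (u, false) (v, false) ≥ PE2 G p T (u, false) (v, true) :=
  bunkbed_E2_of_small_T_general G u v T hT p hp

end
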